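/- Let κ > 0, ω ∈ [0, 1], and let f : [0, κ] → ℝ be continuous. Then there exists a unique continuous function Λ : [0, κ] → ℝ satisfying the Fredholm integral equation Λ(τ) = (ω/2) ∫_0^κ E₁(|τ − t|) Λ(t) dt + f(τ) for all τ ∈ [0, κ]. (The basic-state nondimensional total intensity of the illuminated algal suspension is the case f(τ) = e^{−τ/cos θ₀} + 2 I_D E₂(τ); uniqueness follows because the integral operator is a sup-norm contraction with constant ω(1 − E₂(κ)) < 1.) -/

import Mathlib

/-!
Writing `E₁(x) = ∫₀¹ μ⁻¹ e^{-x/μ} dμ` and exchanging the order of integration reduces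
everything to the elementary kernel `e^{-|τ-t|/μ}`. Since `∫₀^κ e^{-|τ-t|/μ} dt ≤ 2μ(1 - e^{-κ/μ})`
for `τ ∈ [0, κ]`, one gets `∫₀^κ E₁(|τ-t|) dt ≤ 2(1 - E₂(κ))`, so the right-hand side of the
equation is a contraction of `C([0, κ])` with constant `ω(1 - E₂(κ)) < 1`. It maps continuous
functions to continuous ones because each inner integral is continuous in `τ` and bounded by
`2μ sup |Λ|`, which makes the outer `dμ`-integral amenable to dominated convergence. Banach's
fixed point theorem gives existence and uniqueness.
-/

/-- The exponential integral of order 1: `E₁(x) = ∫_0^1 μ⁻¹ e^{-x/μ} dμ`. -/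
noncomputable def expIntegral₁ (x : ℝ) : ℝ := ∫ μ in (0:ℝ)..1, μ⁻¹ * Real.exp (-x / μ)

open MeasureTheory Real Set

theorem integral_exp_sub_div {μ : ℝ} (hμ : 0 < μ) (c a b : ℝ) :
    ∫ t in a..b, exp ((t - c) / μ) = μ * exp ((b - c) / μ) - μ * exp ((a - c) / μ) := by
  have := intervalIntegral.integral_comp_div_sub (fun x => exp x) hμ.ne' (c / μ) (a := a) (b := b)
  simp only [sub_div, this, integral_exp, smul_eq_mul]
  ring

theorem integral_exp_neg_abs_sub_div {μ a b τ : ℝ} (hμ : 0 < μ) (haτ : a ≤ τ) (hτb : τ ≤ b) :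
    ∫ t in a..b, exp (-|τ - t| / μ) =
      2 * μ - μ * exp ((a - τ) / μ) - μ * exp ((τ - b) / μ) := by
  have hcont : Continuous fun t => exp (-|τ - t| / μ) := by fun_prop
  rw [← intervalIntegral.integral_add_adjacent_intervals (b := τ)
    (hcont.intervalIntegrable a τ) (hcont.intervalIntegrable τ b)]
  have hleft : ∫ t in a..τ, exp (-|τ - t| / μ) = ∫ t in a..τ, exp ((t - τ) / μ) := by
    refine intervalIntegral.integral_congr fun t ht => ?_
    rw [uIcc_of_le haτ] at ht
    rw [abs_of_nonneg (sub_nonneg.2 ht.2), neg_sub]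
  have hright : ∫ t in τ..b, exp (-|τ - t| / μ) = ∫ t in τ..b, exp ((τ - t) / μ) := by
    refine intervalIntegral.integral_congr fun t ht => ?_
    rw [uIcc_of_le hτb] at ht
    rw [abs_of_nonpos (sub_nonpos.2 ht.1), neg_neg]
  have := intervalIntegral.integral_comp_sub_div (fun x => exp x) hμ.ne' (τ / μ) (a := τ) (b := b)
  rw [hleft, hright, integral_exp_sub_div hμ]
  simp only [sub_div, this, integral_exp, smul_eq_mul, sub_self, zero_div, exp_zero]
  ring

theorem exp_neg_abs_div_le_one {μ : ℝ} (hμ : 0 ≤ μ) (x : ℝ) : exp (-|x| / μ) ≤ 1 :=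
  exp_le_one_iff.2 (div_nonpos_of_nonpos_of_nonneg (neg_nonpos.2 (abs_nonneg x)) hμ)

theorem setIntegral_exp_neg_abs_sub_div_le {μ : ℝ} (hμ : 0 < μ) (τ a b : ℝ) :
    ∫ t in Ioc a b, exp (-|τ - t| / μ) ≤ 2 * μ := by
  have hsub : Ioc a b ⊆ Ioc (min a τ) (max b τ) :=
    Ioc_subset_Ioc (min_le_left a τ) (le_max_left b τ)
  calc ∫ t in Ioc a b, exp (-|τ - t| / μ)
      ≤ ∫ t in Ioc (min a τ) (max b τ), exp (-|τ - t| / μ) :=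
        setIntegral_mono_set (Continuous.integrableOn_Ioc (by fun_prop))
          (.of_forall fun _ => (exp_pos _).le) hsub.eventuallyLE
    _ = 2 * μ - μ * exp ((min a τ - τ) / μ) - μ * exp ((τ - max b τ) / μ) := by
        rw [← intervalIntegral.integral_of_le ((min_le_right a τ).trans (le_max_right b τ)),
          integral_exp_neg_abs_sub_div hμ (min_le_right a τ) (le_max_right b τ)]
    _ ≤ 2 * μ := by
        have := mul_pos hμ (exp_pos ((min a τ - τ) / μ))
        have := mul_pos hμ (exp_pos ((τ - max b τ) / μ))
        linarith

theorem integral_exp_neg_abs_sub_div_le_of_mem {μ a b τ : ℝ} (hμ : 0 < μ) (hτ : τ ∈ Icc a b) :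
    ∫ t in a..b, exp (-|τ - t| / μ) ≤ 2 * μ * (1 - exp ((a - b) / μ)) := by
  have hleft : μ * exp ((a - b) / μ) ≤ μ * exp ((a - τ) / μ) := by
    gcongr; linarith [hτ.2]
  have hright : μ * exp ((a - b) / μ) ≤ μ * exp ((τ - b) / μ) := by
    gcongr; linarith [hτ.1]
  rw [integral_exp_neg_abs_sub_div hμ hτ.1 hτ.2]
  linarith

theorem setIntegral_exp_neg_abs_sub_div_mul_norm_le {G : ℝ → ℝ} {M : ℝ} (hM : ∀ t, ‖G t‖ ≤ M)
    {μ : ℝ} (hμ : 0 < μ) (τ a b : ℝ) :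
    ∫ t in Ioc a b, exp (-|τ - t| / μ) * ‖G t‖ ≤ 2 * μ * M := by
  calc ∫ t in Ioc a b, exp (-|τ - t| / μ) * ‖G t‖
      ≤ ∫ t in Ioc a b, exp (-|τ - t| / μ) * M :=
        integral_mono_of_nonneg (.of_forall fun t => by positivity)
          (Continuous.integrableOn_Ioc (by fun_prop))
          (.of_forall fun t => mul_le_mul_of_nonneg_left (hM t) (exp_pos _).le)
    _ ≤ 2 * μ * M := by
        rw [integral_mul_const]
        exact mul_le_mul_of_nonneg_right (setIntegral_exp_neg_abs_sub_div_le hμ τ a b)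
          ((norm_nonneg _).trans (hM 0))

theorem expIntegral₁_eq_setIntegral (x : ℝ) :
    expIntegral₁ x = ∫ μ in Ioc (0:ℝ) 1, μ⁻¹ * exp (-x / μ) :=
  intervalIntegral.integral_of_le zero_le_one

theorem expIntegral₁_nonneg (x : ℝ) : 0 ≤ expIntegral₁ x := by
  rw [expIntegral₁_eq_setIntegral]
  exact setIntegral_nonneg measurableSet_Ioc fun μ hμ =>
    mul_nonneg (inv_nonneg.2 hμ.1.le) (exp_pos _).le

section Fubini

variable {G : ℝ → ℝ} {M : ℝ}

theorem integrable_prod_inv_mul_exp_neg_abs_sub_div_mul (hG : Measurable G)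
    (hM : ∀ t, ‖G t‖ ≤ M) (τ a b : ℝ) :
    Integrable (fun p : ℝ × ℝ => p.2⁻¹ * exp (-|τ - p.1| / p.2) * G p.1)
      ((volume.restrict (Ioc a b)).prod (volume.restrict (Ioc (0:ℝ) 1))) := by
  have hmeas : Measurable fun p : ℝ × ℝ => p.2⁻¹ * exp (-|τ - p.1| / p.2) * G p.1 := by
    fun_prop
  rw [integrable_prod_iff' hmeas.aestronglyMeasurable]
  constructor
  · filter_upwards [ae_restrict_mem measurableSet_Ioc] with μ hμ
    refine Integrable.mono' (integrable_const (μ⁻¹ * M))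
      (hmeas.comp (measurable_id.prodMk measurable_const)).aestronglyMeasurable
      (.of_forall fun t => ?_)
    have := hμ.1
    rw [norm_mul, norm_mul, Real.norm_of_nonneg (inv_nonneg.2 this.le),
      Real.norm_of_nonneg (exp_pos _).le]
    calc μ⁻¹ * exp (-|τ - t| / μ) * ‖G t‖ ≤ μ⁻¹ * 1 * M := by
          gcongr
          exacts [exp_neg_abs_div_le_one this.le _, hM t]
      _ = μ⁻¹ * M := by rw [mul_one]
  · refine Integrable.mono' (integrable_const (2 * M))
      (hmeas.norm.stronglyMeasurable.integral_prod_left').aestronglyMeasurable ?_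
    filter_upwards [ae_restrict_mem measurableSet_Ioc] with μ hμ
    have := hμ.1
    rw [Real.norm_of_nonneg (integral_nonneg fun t => norm_nonneg _)]
    calc ∫ t in Ioc a b, ‖μ⁻¹ * exp (-|τ - t| / μ) * G t‖
        = μ⁻¹ * ∫ t in Ioc a b, exp (-|τ - t| / μ) * ‖G t‖ := by
          rw [← integral_const_mul]
          simp only [norm_mul, Real.norm_of_nonneg (inv_nonneg.2 this.le),
            Real.norm_of_nonneg (exp_pos _).le, mul_assoc]
      _ ≤ μ⁻¹ * (2 * μ * M) := by
          gcongr
          exact setIntegral_exp_neg_abs_sub_div_mul_norm_le hM this τ a b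
      _ = 2 * M := by field_simp

theorem integrableOn_expIntegral₁_abs_sub_mul (hG : Measurable G) (hM : ∀ t, ‖G t‖ ≤ M)
    (τ a b : ℝ) : IntegrableOn (fun t => expIntegral₁ |τ - t| * G t) (Ioc a b) := by
  refine (integrable_prod_inv_mul_exp_neg_abs_sub_div_mul hG hM τ a b).integral_prod_left.congr
    (.of_forall fun t => ?_)
  simp only [expIntegral₁_eq_setIntegral, ← integral_mul_const]

theorem setIntegral_expIntegral₁_abs_sub_mul (hG : Measurable G) (hM : ∀ t, ‖G t‖ ≤ M)
    (τ a b : ℝ) :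
    ∫ t in Ioc a b, expIntegral₁ |τ - t| * G t =
      ∫ μ in Ioc (0:ℝ) 1, μ⁻¹ * ∫ t in Ioc a b, exp (-|τ - t| / μ) * G t := by
  simp only [expIntegral₁_eq_setIntegral, ← integral_mul_const, ← integral_const_mul, ← mul_assoc]
  exact integral_integral_swap (f := fun t μ : ℝ => μ⁻¹ * exp (-|τ - t| / μ) * G t)
    (integrable_prod_inv_mul_exp_neg_abs_sub_div_mul hG hM τ a b)

end Fubini

noncomputable def expIntegral₂ (x : ℝ) : ℝ := ∫ μ in (0:ℝ)..1, exp (-x / μ)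

theorem intervalIntegrable_exp_neg_div {x : ℝ} (hx : 0 ≤ x) :
    IntervalIntegrable (fun μ => exp (-x / μ)) volume 0 1 := by
  rw [intervalIntegrable_iff_integrableOn_Ioc_of_le zero_le_one]
  refine Measure.integrableOn_of_bounded (M := 1) measure_Ioc_lt_top.ne (by fun_prop) ?_
  filter_upwards [ae_restrict_mem measurableSet_Ioc] with μ hμ
  rw [Real.norm_of_nonneg (exp_pos _).le, ← abs_of_nonneg hx]
  exact exp_neg_abs_div_le_one hμ.1.le x

theorem expIntegral₂_pos {x : ℝ} (hx : 0 ≤ x) : 0 < expIntegral₂ x :=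
  intervalIntegral.intervalIntegral_pos_of_pos_on (intervalIntegrable_exp_neg_div hx)
    (fun _ _ => exp_pos _) zero_lt_one

theorem expIntegral₂_le_one {x : ℝ} (hx : 0 ≤ x) : expIntegral₂ x ≤ 1 := by
  have := intervalIntegral.integral_mono_on zero_le_one (intervalIntegrable_exp_neg_div hx)
    intervalIntegrable_const fun μ hμ => by
      rw [← abs_of_nonneg hx]
      exact exp_neg_abs_div_le_one hμ.1 x
  simpa [expIntegral₂] using this

theorem setIntegral_expIntegral₁_abs_sub_le {τ a b : ℝ} (hτ : τ ∈ Icc a b) :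
    ∫ t in Ioc a b, expIntegral₁ |τ - t| ≤ 2 * (1 - expIntegral₂ (b - a)) := by
  have hab : 0 ≤ b - a := sub_nonneg.2 (hτ.1.trans hτ.2)
  have hfubini := setIntegral_expIntegral₁_abs_sub_mul (G := 1) (M := 1) measurable_const
    (fun _ => by simp) τ a b
  simp only [Pi.one_apply, mul_one] at hfubini
  have hE₂ : IntegrableOn (fun μ => exp (-(b - a) / μ)) (Ioc 0 1) :=
    (intervalIntegrable_iff_integrableOn_Ioc_of_le zero_le_one).1
      (intervalIntegrable_exp_neg_div hab)
  calc ∫ t in Ioc a b, expIntegral₁ |τ - t|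
      = ∫ μ in Ioc (0:ℝ) 1, μ⁻¹ * ∫ t in Ioc a b, exp (-|τ - t| / μ) := hfubini
    _ ≤ ∫ μ in Ioc (0:ℝ) 1, 2 * (1 - exp (-(b - a) / μ)) := by
        refine integral_mono_of_nonneg ?_ (((integrable_const 1).sub hE₂).const_mul 2) ?_
        · filter_upwards [ae_restrict_mem measurableSet_Ioc] with μ hμ
          have := hμ.1
          exact mul_nonneg (inv_nonneg.2 this.le)
            (setIntegral_nonneg measurableSet_Ioc fun t _ => (exp_pos _).le)
        · filter_upwards [ae_restrict_mem measurableSet_Ioc] with μ hμ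
          rw [← intervalIntegral.integral_of_le (hτ.1.trans hτ.2), neg_sub]
          calc μ⁻¹ * ∫ t in a..b, exp (-|τ - t| / μ)
              ≤ μ⁻¹ * (2 * μ * (1 - exp ((a - b) / μ))) := by
                gcongr
                · exact inv_nonneg.2 hμ.1.le
                · exact integral_exp_neg_abs_sub_div_le_of_mem hμ.1 hτ
            _ = 2 * (1 - exp ((a - b) / μ)) := by field_simp [hμ.1.ne']
    _ = 2 * (1 - expIntegral₂ (b - a)) := by
        rw [integral_const_mul, integral_sub (integrable_const 1) hE₂, expIntegral₂,
          intervalIntegral.integral_of_le zero_le_one]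
        simp

section Continuity

variable {G : ℝ → ℝ} {M : ℝ}

theorem norm_setIntegral_expIntegral₁_abs_sub_mul_le {τ a b : ℝ} (hτ : τ ∈ Icc a b)
    (hM : ∀ t, ‖G t‖ ≤ M) :
    ‖∫ t in Ioc a b, expIntegral₁ |τ - t| * G t‖ ≤ 2 * (1 - expIntegral₂ (b - a)) * M := by
  have hint := integrableOn_expIntegral₁_abs_sub_mul (G := 1) (M := 1) measurable_const
    (fun _ => by simp) τ a b
  simp only [Pi.one_apply, mul_one] at hint
  calc ‖∫ t in Ioc a b, expIntegral₁ |τ - t| * G t‖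
      ≤ ∫ t in Ioc a b, expIntegral₁ |τ - t| * M :=
        norm_integral_le_of_norm_le (hint.mul_const M) (.of_forall fun t => by
          rw [norm_mul, Real.norm_of_nonneg (expIntegral₁_nonneg _)]
          exact mul_le_mul_of_nonneg_left (hM t) (expIntegral₁_nonneg _))
    _ ≤ 2 * (1 - expIntegral₂ (b - a)) * M := by
        rw [integral_mul_const]
        exact mul_le_mul_of_nonneg_right (setIntegral_expIntegral₁_abs_sub_le hτ)
          ((norm_nonneg _).trans (hM 0))

theorem continuous_setIntegral_exp_neg_abs_sub_div_mul (hG : Measurable G)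
    (hM : ∀ t, ‖G t‖ ≤ M) {μ : ℝ} (hμ : 0 < μ) (a b : ℝ) :
    Continuous fun τ => ∫ t in Ioc a b, exp (-|τ - t| / μ) * G t := by
  refine continuous_of_dominated (bound := fun _ => M) (fun τ => by fun_prop)
    (fun τ => .of_forall fun t => ?_) (integrable_const M) (.of_forall fun t => by fun_prop)
  rw [norm_mul, Real.norm_of_nonneg (exp_pos _).le]
  exact (mul_le_of_le_one_left (norm_nonneg _) (exp_neg_abs_div_le_one hμ.le _)).trans (hM t)

theorem continuous_setIntegral_expIntegral₁_abs_sub_mul (hG : Measurable G)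
    (hM : ∀ t, ‖G t‖ ≤ M) (a b : ℝ) :
    Continuous fun τ => ∫ t in Ioc a b, expIntegral₁ |τ - t| * G t := by
  simp only [setIntegral_expIntegral₁_abs_sub_mul hG hM]
  refine continuous_of_dominated (bound := fun _ => 2 * M) (fun τ => ?_) (fun τ => ?_)
    (integrable_const _) ?_
  · have hmeas : Measurable fun p : ℝ × ℝ => exp (-|τ - p.1| / p.2) * G p.1 := by fun_prop
    exact (measurable_inv.mul hmeas.stronglyMeasurable.integral_prod_left'.measurable)
      |>.aestronglyMeasurable
  · filter_upwards [ae_restrict_mem measurableSet_Ioc] with μ hμ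
    have := hμ.1
    calc ‖μ⁻¹ * ∫ t in Ioc a b, exp (-|τ - t| / μ) * G t‖
        ≤ μ⁻¹ * ∫ t in Ioc a b, exp (-|τ - t| / μ) * ‖G t‖ := by
          rw [norm_mul, Real.norm_of_nonneg (inv_nonneg.2 this.le)]
          gcongr
          refine (norm_integral_le_integral_norm _).trans_eq (integral_congr_ae
            (.of_forall fun t => ?_))
          simp only [norm_mul, Real.norm_of_nonneg (exp_pos _).le]
      _ ≤ μ⁻¹ * (2 * μ * M) := by
          gcongr
          exact setIntegral_exp_neg_abs_sub_div_mul_norm_le hM this τ a b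
      _ = 2 * M := by field_simp
  · filter_upwards [ae_restrict_mem measurableSet_Ioc] with μ hμ
    exact continuous_const.mul (continuous_setIntegral_exp_neg_abs_sub_div_mul hG hM hμ.1 a b)

end Continuity

noncomputable def fredholmRHS (κ ω : ℝ) (f Λ : ℝ → ℝ) (τ : ℝ) : ℝ :=
  ω / 2 * (∫ t in (0:ℝ)..κ, expIntegral₁ |τ - t| * Λ t) + f τ

section Fredholm

variable {κ ω : ℝ} {f : ℝ → ℝ}

theorem fredholmRHS_congr (hκ : 0 ≤ κ) {Λ Λ' : ℝ → ℝ} (h : EqOn Λ Λ' (Icc 0 κ)) :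
    fredholmRHS κ ω f Λ = fredholmRHS κ ω f Λ' := by
  ext τ
  unfold fredholmRHS
  congr 2
  exact intervalIntegral.integral_congr fun t ht => by
    rw [uIcc_of_le hκ] at ht
    rw [h ht]

theorem continuousOn_fredholmRHS (hκ : 0 ≤ κ) (hf : ContinuousOn f (Icc 0 κ)) {Λ : ℝ → ℝ}
    {M : ℝ} (hΛ : Measurable Λ) (hM : ∀ t, ‖Λ t‖ ≤ M) :
    ContinuousOn (fredholmRHS κ ω f Λ) (Icc 0 κ) := by
  unfold fredholmRHS
  simp only [intervalIntegral.integral_of_le hκ]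
  exact ((continuous_setIntegral_expIntegral₁_abs_sub_mul hΛ hM 0 κ).const_mul _
    |>.continuousOn).add hf

noncomputable def fredholmOp (hκ : 0 ≤ κ) (ω : ℝ) (hf : ContinuousOn f (Icc 0 κ))
    (g : C(Icc 0 κ, ℝ)) : C(Icc 0 κ, ℝ) :=
  ⟨(Icc 0 κ).domRestrict (fredholmRHS κ ω f (IccExtend hκ g)),
    (continuousOn_fredholmRHS hκ hf (g.continuous.Icc_extend').measurable
      (fun _ => g.norm_coe_le_norm _)).domRestrict⟩

theorem isFixedPt_fredholmOp_iff (hκ : 0 ≤ κ) (hf : ContinuousOn f (Icc 0 κ)) {Λ : ℝ → ℝ}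
    (hΛ : ContinuousOn Λ (Icc 0 κ)) :
    Function.IsFixedPt (fredholmOp hκ ω hf) ⟨(Icc 0 κ).domRestrict Λ, hΛ.domRestrict⟩ ↔
      ∀ τ ∈ Icc 0 κ, Λ τ = fredholmRHS κ ω f Λ τ := by
  have hext : fredholmRHS κ ω f (IccExtend hκ ((Icc 0 κ).domRestrict Λ)) = fredholmRHS κ ω f Λ :=
    fredholmRHS_congr hκ fun _ ht => IccExtend_of_mem hκ _ ht
  rw [Function.IsFixedPt, ContinuousMap.ext_iff, Subtype.forall]
  simp only [fredholmOp, ContinuousMap.coe_mk, Set.domRestrict_apply, hext]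
  exact forall₂_congr fun _ _ => eq_comm

theorem dist_fredholmRHS_le (hω : 0 ≤ ω) {τ : ℝ} (hτ : τ ∈ Icc 0 κ) {Λ Λ' : ℝ → ℝ} {M : ℝ}
    (hΛ : IntervalIntegrable (fun t => expIntegral₁ |τ - t| * Λ t) volume 0 κ)
    (hΛ' : IntervalIntegrable (fun t => expIntegral₁ |τ - t| * Λ' t) volume 0 κ)
    (hM : ∀ t, ‖Λ t - Λ' t‖ ≤ M) :
    dist (fredholmRHS κ ω f Λ τ) (fredholmRHS κ ω f Λ' τ) ≤ ω * (1 - expIntegral₂ κ) * M := by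
  have hdiff : fredholmRHS κ ω f Λ τ - fredholmRHS κ ω f Λ' τ =
      ω / 2 * ∫ t in Ioc 0 κ, expIntegral₁ |τ - t| * (Λ t - Λ' t) := by
    simp only [fredholmRHS, mul_sub, ← intervalIntegral.integral_of_le (hτ.1.trans hτ.2),
      intervalIntegral.integral_sub hΛ hΛ']
    ring
  have hbound := norm_setIntegral_expIntegral₁_abs_sub_mul_le hτ hM
  rw [sub_zero] at hbound
  rw [dist_eq_norm, hdiff, norm_mul, Real.norm_of_nonneg (by positivity)]
  calc ω / 2 * ‖∫ t in Ioc 0 κ, expIntegral₁ |τ - t| * (Λ t - Λ' t)‖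
      ≤ ω / 2 * (2 * (1 - expIntegral₂ κ) * M) := by gcongr
    _ = ω * (1 - expIntegral₂ κ) * M := by ring

theorem contractingWith_fredholmOp (hκ : 0 < κ) (hω : ω ∈ Icc 0 1)
    (hf : ContinuousOn f (Icc 0 κ)) :
    ContractingWith (ω * (1 - expIntegral₂ κ)).toNNReal (fredholmOp hκ.le ω hf) := by
  have hq : ω * (1 - expIntegral₂ κ) < 1 :=
    (mul_le_of_le_one_left (sub_nonneg.2 (expIntegral₂_le_one hκ.le)) hω.2).trans_lt
      (by linarith [expIntegral₂_pos hκ.le])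
  refine ⟨Real.toNNReal_lt_one.2 hq, LipschitzWith.of_dist_le_mul fun g g' => ?_⟩
  rw [ContinuousMap.dist_le (by positivity)]
  intro σ
  have hint (g : C(Icc 0 κ, ℝ)) :
      IntervalIntegrable (fun t => expIntegral₁ |σ - t| * IccExtend hκ.le g t) volume 0 κ :=
    (intervalIntegrable_iff_integrableOn_Ioc_of_le hκ.le).2
      (integrableOn_expIntegral₁_abs_sub_mul (g.continuous.Icc_extend').measurable
        (fun t => g.norm_coe_le_norm _) σ 0 κ)
  refine (dist_fredholmRHS_le hω.1 σ.2 (hint g) (hint g') fun t => ?_).trans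
    (mul_le_mul_of_nonneg_right (Real.le_coe_toNNReal _) dist_nonneg)
  rw [← dist_eq_norm]
  exact ContinuousMap.dist_apply_le_dist _

end Fredholm

/-- For `κ > 0`, single-scattering albedo `ω ∈ [0, 1]` and continuous data `f` on `[0, κ]`,
there is a unique continuous `Λ : [0, κ] → ℝ` solving the Fredholm integral equation
`Λ(τ) = (ω/2) ∫_0^κ E₁(|τ-t|) Λ(t) dt + f(τ)` for all `τ ∈ [0, κ]`. -/
theorem fredholm_existence_uniqueness
    (κ : ℝ) (hκ : 0 < κ) (ω : ℝ) (hω : ω ∈ Set.Icc (0:ℝ) 1)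
    (f : ℝ → ℝ) (hf : ContinuousOn f (Set.Icc 0 κ)) :
    ∃ Λ : ℝ → ℝ, ContinuousOn Λ (Set.Icc 0 κ) ∧
      (∀ τ ∈ Set.Icc (0:ℝ) κ,
        Λ τ = ω / 2 * (∫ t in (0:ℝ)..κ, expIntegral₁ |τ - t| * Λ t) + f τ) ∧
      ∀ Λ' : ℝ → ℝ, ContinuousOn Λ' (Set.Icc 0 κ) →
        (∀ τ ∈ Set.Icc (0:ℝ) κ,
          Λ' τ = ω / 2 * (∫ t in (0:ℝ)..κ, expIntegral₁ |τ - t| * Λ' t) + f τ) →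
        ∀ τ ∈ Set.Icc (0:ℝ) κ, Λ' τ = Λ τ := by
  have hT := contractingWith_fredholmOp hκ hω hf
  obtain ⟨Φ, hΦfix⟩ : ∃ Φ, Function.IsFixedPt (fredholmOp hκ.le ω hf) Φ :=
    ⟨_, hT.fixedPoint_isFixedPt⟩
  have hΦ : ContinuousOn (IccExtend hκ.le Φ) (Icc 0 κ) :=
    (Φ.continuous.Icc_extend').continuousOn
  have hrestrict :
      (⟨(Icc 0 κ).domRestrict (IccExtend hκ.le Φ), hΦ.domRestrict⟩ : C(Icc 0 κ, ℝ)) = Φ :=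
    ContinuousMap.ext fun σ => IccExtend_val hκ.le Φ σ
  rw [← hrestrict] at hΦfix
  refine ⟨IccExtend hκ.le Φ, hΦ, (isFixedPt_fredholmOp_iff hκ.le hf hΦ).1 hΦfix,
    fun Λ' hΛ' hsol τ hτ => ?_⟩
  have := hT.fixedPoint_unique' ((isFixedPt_fredholmOp_iff hκ.le hf hΛ').2 hsol) hΦfix
  exact DFunLike.congr_fun this ⟨τ, hτ⟩
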